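/- For every x ∈ ℝ⁶, ρ̄⁻¹(ρ(x)) = φ_{γ(x)}(x), where γ(x) = (-x₁ cos x₃ - x₂ sin x₃, x₁ sin x₃ - x₂ cos x₃, -x₃), ρ is the SE(2)-invariant map, ρ̄⁻¹(x̄) = (0,0,0,x̄₁,x̄₂,x̄₃), and φ is the SE(2) action on ℝ⁶. That is, applying the invariant reduction and lifting back to the cross section equals moving x to the cross section via the moving frame. -/
import Mathlib


open Real

/-- The SE(2) action on ℝ⁶: `φ_{(z',y',θ')}(x) = R_{θ'} x + (z',y',θ',z',y',θ')ᵀ`. -/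
noncomputable def se2Act (g : ℝ × ℝ × ℝ) (x : ℝ × ℝ × ℝ × ℝ × ℝ × ℝ) :
    ℝ × ℝ × ℝ × ℝ × ℝ × ℝ :=
  ⟨cos g.2.2 * x.1 - sin g.2.2 * x.2.1 + g.1,
   sin g.2.2 * x.1 + cos g.2.2 * x.2.1 + g.2.1,
   x.2.2.1 + g.2.2,
   cos g.2.2 * x.2.2.2.1 - sin g.2.2 * x.2.2.2.2.1 + g.1,
   sin g.2.2 * x.2.2.2.1 + cos g.2.2 * x.2.2.2.2.1 + g.2.1,
   x.2.2.2.2.2 + g.2.2⟩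

/-- The moving frame `γ(x) = (-x₁ cos x₃ - x₂ sin x₃, x₁ sin x₃ - x₂ cos x₃, -x₃)`. -/
noncomputable def movingFrame (x : ℝ × ℝ × ℝ × ℝ × ℝ × ℝ) : ℝ × ℝ × ℝ :=
  ⟨-x.1 * cos x.2.2.1 - x.2.1 * sin x.2.2.1,
   x.1 * sin x.2.2.1 - x.2.1 * cos x.2.2.1,
   -x.2.2.1⟩

/-- The invariants
`ρ(x) = ((x₄-x₁)cos x₃ + (x₅-x₂)sin x₃, -(x₄-x₁)sin x₃ + (x₅-x₂)cos x₃, x₆-x₃)`. -/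
noncomputable def invariants (x : ℝ × ℝ × ℝ × ℝ × ℝ × ℝ) : ℝ × ℝ × ℝ :=
  ⟨(x.2.2.2.1 - x.1) * cos x.2.2.1 + (x.2.2.2.2.1 - x.2.1) * sin x.2.2.1,
   -(x.2.2.2.1 - x.1) * sin x.2.2.1 + (x.2.2.2.2.1 - x.2.1) * cos x.2.2.1,
   x.2.2.2.2.2 - x.2.2.1⟩

/-- `ρ̄⁻¹(x̄) = (0, 0, 0, x̄₁, x̄₂, x̄₃)`. -/
def invariantsInv (xb : ℝ × ℝ × ℝ) : ℝ × ℝ × ℝ × ℝ × ℝ × ℝ :=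
  ⟨0, 0, 0, xb.1, xb.2.1, xb.2.2⟩

/-- For every `x ∈ ℝ⁶`, `ρ̄⁻¹(ρ(x)) = φ_{γ(x)}(x)`: applying the
invariant reduction and lifting back to the cross section equals moving `x` to
the cross section via the moving frame. -/
theorem stmt_17 (x : ℝ × ℝ × ℝ × ℝ × ℝ × ℝ) :
    invariantsInv (invariants x) = se2Act (movingFrame x) x := by
  simp only [invariantsInv, invariants, se2Act, movingFrame]
  refine Prod.ext ?_ (Prod.ext ?_ (Prod.ext ?_ (Prod.ext ?_ (Prod.ext ?_ ?_)))) <;>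
    simp [cos_neg, sin_neg] <;> ring_nf <;>
    nlinarith [sin_sq_add_cos_sq x.2.2.1]
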